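/- Let (W_1,…,W_m) be a Hall partition of F and define F^p by F^p(x) = F_{⋃_{j<i}W_j}(x) for x ∈ W_i. Then F^p equals the alldifferent kernel F^*, where F^*(x) = { y ∈ F(x) : there exists an injective selection s of F with s(x) = y }. -/
import Mathlib


open Finset
open scoped Classical

variable {α β : Type*}

section Defs
variable [DecidableEq α] [DecidableEq β]

/-- Image of a set under a set-valued mapping. -/
def im (F : α → Finset β) (W : Finset α) : Finset β := W.biUnion F

/-- Complement mapping `F_W : x ↦ F(x) \\ F(W)`. -/
def cmap (F : α → Finset β) (W : Finset α) : α → Finset β := fun x => F x \ im F W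

/-- Hall condition of a set-valued mapping on a domain `D`. -/
def HallOn (F : α → Finset β) (D : Finset α) : Prop := ∀ W ⊆ D, W.card ≤ (im F W).card

/-- A critical set: nonempty with `♯F(W) = ♯W`. -/
def Critical (F : α → Finset β) (W : Finset α) : Prop := W.Nonempty ∧ (im F W).card = W.card

/-- A non-reducible set: nonempty with no proper critical subset. -/
def NonReducible (F : α → Finset β) (W : Finset α) : Prop :=
  W.Nonempty ∧ ∀ V, V ⊂ W → ¬ Critical F V

/-- Union of the first `i` parts: `⋃_{j<i} W_j`. -/
def pre {m : ℕ} (W : Fin m → Finset α) (i : Fin m) : Finset α :=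
  (Finset.univ.filter (fun j => j.val < i.val)).biUnion W

/-- Hall partition of `F` on the whole domain. -/
def IsHallPartition [Fintype α] (F : α → Finset β) {m : ℕ} (W : Fin m → Finset α) : Prop :=
  (∀ i j, i ≠ j → Disjoint (W i) (W j)) ∧
  (Finset.univ.biUnion W = Finset.univ) ∧
  (∀ i, ∀ x ∈ W i, (cmap F (pre W i) x).Nonempty) ∧
  (∀ i, NonReducible (cmap F (pre W i)) (W i)) ∧
  (∀ i : Fin m, i.val < m - 1 → Critical (cmap F (pre W i)) (W i))

/-- The alldifferent kernel `F^*`. -/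
noncomputable def kernel [Fintype α] (F : α → Finset β) : α → Finset β :=
  fun x => (F x).filter (fun y => ∃ s : α → β, Function.Injective s ∧ (∀ z, s z ∈ F z) ∧ s x = y)

end Defs

section Aux
variable [DecidableEq α] [DecidableEq β]

lemma im_mono {F : α → Finset β} {V V' : Finset α} (h : V ⊆ V') : im F V ⊆ im F V' :=
  Finset.biUnion_subset_biUnion_of_subset_left _ h

lemma subset_im {F : α → Finset β} {V : Finset α} {x : α} (hx : x ∈ V) : F x ⊆ im F V :=
  fun y hy => Finset.mem_biUnion.2 ⟨x, hx, hy⟩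

lemma hallOn_of_nonReducible (G : α → Finset β) (D : Finset α)
    (hne : ∀ x ∈ D, (G x).Nonempty) (hnr : NonReducible G D) : HallOn G D := by
  have main : ∀ n : ℕ, ∀ V : Finset α, V ⊆ D → V.card ≤ n → V.card ≤ (im G V).card := by
    intro n
    induction n with
    | zero => intro V _ h; omega
    | succ n ih =>
      intro V hVD hVn
      by_contra hcon
      push_neg at hcon
      have hVne : V.Nonempty := by
        rw [← Finset.card_pos]; omega
      obtain ⟨x, hx⟩ := hVne
      set U := V.erase x with hU
      have hUV : U ⊆ V := Finset.erase_subset _ _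
      have hUcard : U.card = V.card - 1 := Finset.card_erase_of_mem hx
      have hIH : U.card ≤ (im G U).card := ih U (hUV.trans hVD) (by omega)
      have hUle : (im G U).card ≤ (im G V).card := Finset.card_le_card (im_mono hUV)
      have hUeq : (im G U).card = U.card := by omega
      by_cases hUne : U.Nonempty
      · have hUssV : U ⊂ V := Finset.erase_ssubset hx
        exact hnr.2 U (hUssV.trans_subset hVD) ⟨hUne, hUeq⟩
      · have hU0 : U.card = 0 := by
          rw [Finset.not_nonempty_iff_eq_empty] at hUne; simp [hUne]
        have hV1 : V.card = 1 := by omega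
        have : (G x).Nonempty := hne x (hVD hx)
        have h1 : 1 ≤ (im G V).card := by
          obtain ⟨w, hw⟩ := this
          exact Finset.card_pos.2 ⟨w, subset_im hx hw⟩
        omega
  intro V hV
  exact main V.card V hV le_rfl

lemma strict_hall (G : α → Finset β) (D : Finset α)
    (hne : ∀ x ∈ D, (G x).Nonempty) (hnr : NonReducible G D)
    {V : Finset α} (hV : V ⊂ D) (hVne : V.Nonempty) : V.card + 1 ≤ (im G V).card := by
  have h1 : V.card ≤ (im G V).card := hallOn_of_nonReducible G D hne hnr V hV.subset
  have h2 : (im G V).card ≠ V.card := fun h => hnr.2 V hV ⟨hVne, h⟩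
  omega

lemma exists_injOn_selection (G : α → Finset β) (D : Finset α)
    (hne : ∀ x ∈ D, (G x).Nonempty) (hnr : NonReducible G D)
    {x : α} (hx : x ∈ D) {y : β} (hy : y ∈ G x) :
    ∃ t : α → β, Set.InjOn t ↑D ∧ (∀ z ∈ D, t z ∈ G z) ∧ t x = y := by
  classical
  set G' : α → Finset β := fun z => if z = x then {y} else G z with hG'
  have hsub : ∀ z, G' z ⊆ G z := by
    intro z w hw
    by_cases h : z = x
    · subst h; simp [hG'] at hw; subst hw; exact hy
    · simpa [hG', h] using hw
  have hHall' : ∀ V ⊆ D, V.card ≤ (im G' V).card := by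
    intro V hVD
    by_cases hxV : x ∈ V
    · have hyV : y ∈ im G' V := subset_im hxV (by simp [hG'])
      have himU : im G (V.erase x) ⊆ im G' V := by
        intro w hw
        obtain ⟨z, hz, hwz⟩ := Finset.mem_biUnion.1 hw
        have hzx : z ≠ x := Finset.ne_of_mem_erase hz
        exact subset_im (Finset.erase_subset _ _ hz) (by simpa [hG', hzx] using hwz)
      by_cases hUne : (V.erase x).Nonempty
      · have hss : V.erase x ⊂ D := by
          refine Finset.ssubset_iff_of_subset ((Finset.erase_subset _ _).trans hVD) |>.2
            ⟨x, hx, Finset.notMem_erase _ _⟩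
        have := strict_hall G D hne hnr hss hUne
        have hle : (im G (V.erase x)).card ≤ (im G' V).card := Finset.card_le_card himU
        have hc : (V.erase x).card = V.card - 1 := Finset.card_erase_of_mem hxV
        have hVpos : 0 < V.card := Finset.card_pos.2 ⟨x, hxV⟩
        omega
      · have hV1 : V.card = 1 := by
          rw [Finset.not_nonempty_iff_eq_empty] at hUne
          have := Finset.card_erase_of_mem hxV
          rw [hUne] at this
          simp at this
          have hVpos : 0 < V.card := Finset.card_pos.2 ⟨x, hxV⟩
          omega
        have : 1 ≤ (im G' V).card := Finset.card_pos.2 ⟨y, hyV⟩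
        omega
    · have : im G' V = im G V := by
        apply Finset.biUnion_congr rfl
        intro z hz
        have : z ≠ x := fun h => hxV (h ▸ hz)
        simp [hG', this]
      rw [this]
      exact hallOn_of_nonReducible G D hne hnr V hVD
  set t' : {z // z ∈ D} → Finset β := fun z => G' z.val with ht'
  have hsubHall : ∀ s : Finset {z // z ∈ D}, s.card ≤ (s.biUnion t').card := by
    intro s
    have h1 : (s.image Subtype.val).card = s.card :=
      Finset.card_image_of_injective _ Subtype.val_injective
    have h2 : s.biUnion t' = im G' (s.image Subtype.val) := by
      ext w
      simp only [Finset.mem_biUnion, im, Finset.mem_image, ht']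
      constructor
      · rintro ⟨z, hz, hw⟩; exact ⟨z.val, ⟨z, hz, rfl⟩, hw⟩
      · rintro ⟨v, ⟨z, hz, rfl⟩, hw⟩; exact ⟨z, hz, hw⟩
    rw [← h1, h2]
    exact hHall' _ (by intro v hv; obtain ⟨z, _, rfl⟩ := Finset.mem_image.1 hv; exact z.2)
  obtain ⟨f, hfinj, hf⟩ := (Finset.all_card_le_biUnion_card_iff_existsInjective' t').1 hsubHall
  refine ⟨fun z => if h : z ∈ D then f ⟨z, h⟩ else y, ?_, ?_, ?_⟩
  · intro a ha b hb hab
    rw [Finset.mem_coe] at ha hb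
    simp only [dif_pos ha, dif_pos hb] at hab
    exact congrArg Subtype.val (hfinj hab)
  · intro z hz
    simp only [dif_pos hz]
    exact hsub z (hf ⟨z, hz⟩)
  · simp only [dif_pos hx]
    have := hf ⟨x, hx⟩
    simpa [ht', hG'] using this

end Aux

theorem stmt11 [Fintype α] [Nonempty α] [DecidableEq α] [Fintype β] [Nonempty β] [DecidableEq β]
    (F : α → Finset β) {m : ℕ} (W : Fin m → Finset α) (hHP : IsHallPartition F W) :
    ∀ i : Fin m, ∀ x ∈ W i, kernel F x = cmap F (pre W i) x := by
  obtain ⟨hdisj, hcover, hne, hnr, hcrit⟩ := hHP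
  intro i x hx
  -- card bound for prefixes
  have hPk : ∀ k : ℕ, k ≤ m - 1 →
      (im F ((Finset.univ.filter (fun j : Fin m => j.val < k)).biUnion W)).card ≤
      ((Finset.univ.filter (fun j : Fin m => j.val < k)).biUnion W).card := by
    intro k
    induction k with
    | zero => intro _; simp [im]
    | succ k ih =>
      intro hk
      have hkm1 : k < m - 1 := by omega
      have hkm : k < m := by omega
      set j : Fin m := ⟨k, hkm⟩ with hj
      have hsplit : (Finset.univ.filter (fun j' : Fin m => j'.val < k + 1)) =
          insert j (Finset.univ.filter (fun j' : Fin m => j'.val < k)) := by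
        ext j'
        simp only [Finset.mem_filter, Finset.mem_univ, true_and, Finset.mem_insert, Fin.ext_iff,
          hj]
        omega
      rw [hsplit, Finset.biUnion_insert]
      set A := (Finset.univ.filter (fun j' : Fin m => j'.val < k)).biUnion W with hA
      have hprej : pre W j = A := rfl
      have hdisjA : Disjoint (W j) A := by
        rw [hA, Finset.disjoint_biUnion_right]
        intro j' hj'
        simp only [Finset.mem_filter, Finset.mem_univ, true_and] at hj'
        exact hdisj j j' (by simp [Fin.ext_iff, hj]; omega)
      have hcard : (W j ∪ A).card = (W j).card + A.card := Finset.card_union_of_disjoint hdisjA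
      have himsplit : im F (W j ∪ A) ⊆ im (cmap F A) (W j) ∪ im F A := by
        intro w hw
        obtain ⟨z, hz, hwz⟩ := Finset.mem_biUnion.1 hw
        rcases Finset.mem_union.1 hz with hzW | hzA
        · by_cases hwA : w ∈ im F A
          · exact Finset.mem_union_right _ hwA
          · exact Finset.mem_union_left _
              (Finset.mem_biUnion.2 ⟨z, hzW, Finset.mem_sdiff.2 ⟨hwz, hwA⟩⟩)
        · exact Finset.mem_union_right _ (subset_im hzA hwz)
      have hcritj := hcrit j hkm1
      rw [hprej] at hcritj
      calc (im F (W j ∪ A)).card ≤ (im (cmap F A) (W j) ∪ im F A).card :=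
            Finset.card_le_card himsplit
        _ ≤ (im (cmap F A) (W j)).card + (im F A).card := Finset.card_union_le _ _
        _ ≤ (W j).card + A.card := add_le_add (le_of_eq hcritj.2) (ih (by omega))
        _ = (W j ∪ A).card := hcard.symm
  have hpre_card : (im F (pre W i)).card ≤ (pre W i).card := hPk i.val (by omega)
  have hxnotpre : x ∉ pre W i := by
    intro hxp
    obtain ⟨j', hj', hxj'⟩ := Finset.mem_biUnion.1 hxp
    simp only [Finset.mem_filter, Finset.mem_univ, true_and] at hj'
    exact Finset.disjoint_left.1 (hdisj j' i (by simp [Fin.ext_iff]; omega)) hxj' hx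
  -- ⊆ direction
  have hsub1 : kernel F x ⊆ cmap F (pre W i) x := by
    intro w hw
    simp only [kernel, Finset.mem_filter] at hw
    obtain ⟨hwF, s, hsinj, hssel, hsx⟩ := hw
    refine Finset.mem_sdiff.2 ⟨hwF, fun hwim => ?_⟩
    have h1 : (pre W i).image s ⊆ im F (pre W i) := by
      intro v hv
      obtain ⟨z, hz, rfl⟩ := Finset.mem_image.1 hv
      exact subset_im hz (hssel z)
    have h2 : (im F (pre W i)).card ≤ ((pre W i).image s).card := by
      rw [Finset.card_image_of_injective _ hsinj]; exact hpre_card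
    have h3 : (pre W i).image s = im F (pre W i) := Finset.eq_of_subset_of_card_le h1 h2
    rw [← h3, Finset.mem_image] at hwim
    obtain ⟨z, hz, hzw⟩ := hwim
    have : z = x := hsinj (by rw [hzw, hsx])
    exact hxnotpre (this ▸ hz)
  -- ⊇ direction
  have hsub2 : cmap F (pre W i) x ⊆ kernel F x := by
    intro y hy
    have hblock : ∀ z : α, ∃ j : Fin m, z ∈ W j := by
      intro z
      have : z ∈ Finset.univ.biUnion W := by rw [hcover]; exact Finset.mem_univ z
      obtain ⟨j, _, hj⟩ := Finset.mem_biUnion.1 this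
      exact ⟨j, hj⟩
    set b : α → Fin m := fun z => Classical.choose (hblock z) with hb
    have hbmem : ∀ z, z ∈ W (b z) := fun z => Classical.choose_spec (hblock z)
    have hbuniq : ∀ z j, z ∈ W j → b z = j := by
      intro z j hz
      by_contra hne'
      exact Finset.disjoint_left.1 (hdisj _ _ hne') (hbmem z) hz
    have hT : ∀ j : Fin m, ∃ t : α → β,
        (Set.InjOn t ↑(W j) ∧ ∀ z ∈ W j, t z ∈ cmap F (pre W j) z) ∧ (j = i → t x = y) := by
      intro j
      by_cases hji : j = i
      · subst hji
        obtain ⟨t, ht1, ht2, ht3⟩ :=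
          exists_injOn_selection (cmap F (pre W j)) (W j) (hne j) (hnr j) hx hy
        exact ⟨t, ⟨ht1, ht2⟩, fun _ => ht3⟩
      · obtain ⟨x0, hx0⟩ := (hnr j).1
        obtain ⟨y0, hy0⟩ := hne j x0 hx0
        obtain ⟨t, ht1, ht2, _⟩ :=
          exists_injOn_selection (cmap F (pre W j)) (W j) (hne j) (hnr j) hx0 hy0
        exact ⟨t, ⟨ht1, ht2⟩, fun h => absurd h hji⟩
    choose T hT1 hT2 using hT
    set s : α → β := fun z => T (b z) z with hs
    have hsel : ∀ z, s z ∈ cmap F (pre W (b z)) z := fun z => (hT1 (b z)).2 z (hbmem z)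
    have hselF : ∀ z, s z ∈ F z := fun z => (Finset.mem_sdiff.1 (hsel z)).1
    have key : ∀ a c : α, (b a).val < (b c).val → s a ≠ s c := by
      intro a c hlt heq
      have hapre : a ∈ pre W (b c) :=
        Finset.mem_biUnion.2 ⟨b a, Finset.mem_filter.2 ⟨Finset.mem_univ _, hlt⟩, hbmem a⟩
      have h1 : s a ∈ im F (pre W (b c)) := subset_im hapre (hselF a)
      have h2 : s c ∉ im F (pre W (b c)) := (Finset.mem_sdiff.1 (hsel c)).2
      rw [heq] at h1
      exact h2 h1
    have hinj : Function.Injective s := by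
      intro a c hac
      rcases lt_trichotomy (b a).val (b c).val with hlt | heq | hgt
      · exact absurd hac (key a c hlt)
      · have hbc : b a = b c := Fin.ext heq
        have hcW : c ∈ W (b a) := hbc ▸ hbmem c
        have : T (b a) a = T (b a) c := by
          rw [hs] at hac; simpa [hbc] using hac
        exact (hT1 (b a)).1 (Finset.mem_coe.2 (hbmem a)) (Finset.mem_coe.2 hcW) this
      · exact absurd hac.symm (key c a hgt)
    have hsx : s x = y := by
      have hbx : b x = i := hbuniq x i hx
      show T (b x) x = y
      rw [hbx]
      exact hT2 i rfl
    simp only [kernel, Finset.mem_filter]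
    exact ⟨(Finset.mem_sdiff.1 hy).1, s, hinj, hselF, hsx⟩
  exact le_antisymm hsub1 hsub2
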